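/- Let Γ1 be a signed graph on n1 vertices with adjacency matrix A1 and marking μ1, and Γ2 a signed graph on n2 vertices with adjacency matrix A2 and marking μ2 satisfying A2·μ2 = k·μ2 for some real k (as holds for a k-net-regular co-regular signed graph). Then for every real x with x·I_{n2} − A2 invertible, (x − k)^{n1} · det(x·I − A(Γ1⊛Γ2)) = det(x·I_{n2} − A2)^{n1} · det( (x³ − k·x² − n2·x)·I_{n1} − (x − k)·A_{1μ}² ); equivalently, besides the eigenvalues λ_{2i} (i ≥ 2) of A2 each repeated n1 times and the eigenvalue k with multiplicity n1(p−1) (p the multiplicity of k in A2), the spectrum of Γ1⊛Γ2 consists, for each eigenvalue λ' of A_{1μ}, of the three roots of x³ − k·x² − (n2 + λ'²)·x + k·λ'² = 0. -/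

import Mathlib

open Matrix Kronecker BigOperators

/-- The block `μ₂ᵀ ⊗ Φ₁`, where `Φ₁ = diag μ₁` and `μ₂` is regarded as an `n₂×1`
column vector: an `n₁ × (n₂·n₁)` matrix. -/
noncomputable def muBlock {n1 n2 : ℕ} (μ1 : Fin n1 → ℝ) (μ2 : Fin n2 → ℝ) :
    Matrix (Fin n1) (Fin n2 × Fin n1) ℝ :=
  Matrix.of fun i jk => μ2 jk.1 * Matrix.diagonal μ1 i jk.2

/-- Adjacency matrix of the duplication add vertex corona `Γ₁ ⊛ Γ₂`, in `3×3` block form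
`[[0, A₁μ, 0], [A₁μ, 0, μ₂ᵀ⊗Φ₁], [0, μ₂⊗Φ₁, A₂⊗I]]` (blocks of sizes `n₁, n₁, n₁·n₂`),
where `A₁μ = Φ₁·|A₁|·Φ₁` is supplied as a parameter. -/
noncomputable def coronaStar {n1 n2 : ℕ} (A1μ : Matrix (Fin n1) (Fin n1) ℝ)
    (A2 : Matrix (Fin n2) (Fin n2) ℝ) (μ1 : Fin n1 → ℝ) (μ2 : Fin n2 → ℝ) :
    Matrix ((Fin n1 ⊕ Fin n1) ⊕ Fin n2 × Fin n1)
      ((Fin n1 ⊕ Fin n1) ⊕ Fin n2 × Fin n1) ℝ :=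
  Matrix.fromBlocks
    (Matrix.fromBlocks 0 A1μ A1μ 0)
    (Matrix.fromRows (0 : Matrix (Fin n1) (Fin n2 × Fin n1) ℝ) (muBlock μ1 μ2))
    (Matrix.fromCols (0 : Matrix (Fin n2 × Fin n1) (Fin n1) ℝ) (muBlock μ1 μ2)ᵀ)
    (A2 ⊗ₖ (1 : Matrix (Fin n1) (Fin n1) ℝ))

/-- The signed `M`-coronal `χ_M(x) = μᵀ·(x·I − M)⁻¹·μ`. -/
noncomputable def coronal {V : Type} [Fintype V] [DecidableEq V]
    (M : Matrix V V ℝ) (μ : V → ℝ) (x : ℝ) : ℝ :=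
  μ ⬝ᵥ ((x • (1 : Matrix V V ℝ) - M)⁻¹ *ᵥ μ)

/-
Take the Schur complement of the block `(x·I − A₂) ⊗ I` in `x·I − A(Γ₁⊛Γ₂)`. The second copy
of `V(Γ₁)` meets the copies of `Γ₂` through `μ₂ ⊗ Φ₁`, and `Φ₁² = I`, so the correction is
`χ_{A₂}(x)·I` on that copy. What remains is `[[x·I, −A₁μ], [−A₁μ, (x − χ)·I]]`, whose diagonal
blocks are scalar, so its determinant is `det(x(x − χ)·I − A₁μ²)`. Finally `A₂μ₂ = kμ₂` gives
`(x − k)·χ_{A₂}(x) = n₂`, and the factor `(x − k)^{n₁}` clears the denominator.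
-/

section BlockDeterminant

variable {m R : Type*} [Fintype m] [DecidableEq m] [CommRing R]

theorem det_fromBlocks_smul_one_of_isRegular (a : R) {d : R} (hd : IsRegular d)
    (B C : Matrix m m R) :
    (fromBlocks (a • 1) B C (d • 1)).det = ((a * d) • 1 - B * C).det := by
  have hmul : fromBlocks (a • 1) B C (d • 1) * fromBlocks (d • 1) 0 (-C) 1
      = fromBlocks ((a * d) • 1 - B * C) B 0 (d • 1) := by
    simp [fromBlocks_multiply, smul_smul, mul_comm d a, sub_eq_add_neg]
  have := congrArg det hmul
  rw [det_mul, det_fromBlocks_zero₁₂, det_fromBlocks_zero₂₁, det_one, mul_one, det_smul, det_one,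
    mul_one] at this
  exact (hd.pow _).right.eq_iff.mp this

theorem det_fromBlocks_smul_one (a d : R) (B C : Matrix m m R) :
    (fromBlocks (a • 1) B C (d • 1)).det = ((a * d) • 1 - B * C).det := by
  -- The corner `X + C d` is monic, hence regular in `R[X]`, and evaluates to `d` at `0`.
  have generic := det_fromBlocks_smul_one_of_isRegular (Polynomial.C a)
    (Polynomial.monic_X_add_C d).isRegular (B.map Polynomial.C) (C.map Polynomial.C)
  convert congrArg (Polynomial.evalRingHom 0) generic using 1 <;> rw [RingHom.map_det] <;>
    congr 1
  · ext (i | i) (j | j) <;> simp [one_apply] <;> split_ifs <;> simp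
  · ext i j
    simp [one_apply, mul_apply, Polynomial.eval_finsetSum]
    split_ifs <;> simp

end BlockDeterminant

theorem sub_mul_coronal_of_mulVec_eq_smul {V : Type} [Fintype V] [DecidableEq V]
    {M : Matrix V V ℝ} {μ : V → ℝ} {k x : ℝ} (hM : M *ᵥ μ = k • μ)
    (hx : IsUnit (x • (1 : Matrix V V ℝ) - M).det) :
    (x - k) * coronal M μ x = μ ⬝ᵥ μ := by
  have hSμ : (x • 1 - M) *ᵥ μ = (x - k) • μ := by
    rw [sub_mulVec, hM, smul_mulVec, one_mulVec, sub_smul]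
  have hinv : (x - k) • ((x • 1 - M)⁻¹ *ᵥ μ) = μ := by
    rw [← mulVec_smul, ← hSμ, mulVec_mulVec, nonsing_inv_mul _ hx, one_mulVec]
  rw [coronal, ← smul_eq_mul, ← dotProduct_smul, hinv]

theorem dotProduct_self_eq_card {V : Type*} [Fintype V] {μ : V → ℝ}
    (hμ : ∀ i, μ i * μ i = 1) : μ ⬝ᵥ μ = Fintype.card V := by
  simp [dotProduct, hμ]

theorem muBlock_mul_kronecker_one_mul_transpose {n1 n2 : ℕ} {μ1 : Fin n1 → ℝ}
    (hμ1 : ∀ i, μ1 i * μ1 i = 1) (μ2 : Fin n2 → ℝ) (N : Matrix (Fin n2) (Fin n2) ℝ) :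
    muBlock μ1 μ2 * (N ⊗ₖ (1 : Matrix (Fin n1) (Fin n1) ℝ)) * (muBlock μ1 μ2)ᵀ
      = (μ2 ⬝ᵥ (N *ᵥ μ2)) • (1 : Matrix (Fin n1) (Fin n1) ℝ) := by
  ext i l
  simp only [mul_apply, transpose_apply, muBlock, of_apply, kroneckerMap_apply,
    Fintype.sum_prod_type, diagonal_apply, one_apply, Matrix.smul_apply, dotProduct, mulVec,
    smul_eq_mul, mul_ite, ite_mul, mul_zero, zero_mul, mul_one, Finset.sum_ite_eq,
    Finset.sum_ite_eq', Finset.mem_univ, if_true, Finset.sum_mul, Finset.mul_sum]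
  split_ifs with hil
  · subst hil
    rw [Finset.sum_comm]
    refine Finset.sum_congr rfl fun y _ => Finset.sum_congr rfl fun z _ => ?_
    linear_combination μ2 y * N y z * μ2 z * hμ1 i
  · simp

theorem smul_one_sub_coronaStar {n1 n2 : ℕ} (A1μ : Matrix (Fin n1) (Fin n1) ℝ)
    (A2 : Matrix (Fin n2) (Fin n2) ℝ) (μ1 : Fin n1 → ℝ) (μ2 : Fin n2 → ℝ) (x : ℝ) :
    x • 1 - coronaStar A1μ A2 μ1 μ2
      = fromBlocks (fromBlocks (x • 1) (-A1μ) (-A1μ) (x • 1))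
          (fromRows 0 (-muBlock μ1 μ2)) (fromCols 0 (-(muBlock μ1 μ2)ᵀ))
          ((x • 1 - A2) ⊗ₖ (1 : Matrix (Fin n1) (Fin n1) ℝ)) := by
  ext ((i | i) | i) ((j | j) | j) <;>
    simp [coronaStar, muBlock, one_apply, Prod.ext_iff, kroneckerMap_apply, mul_ite, and_comm]
  split_ifs <;> simp_all

theorem det_smul_one_sub_coronaStar {n1 n2 : ℕ} (A1μ : Matrix (Fin n1) (Fin n1) ℝ)
    {A2 : Matrix (Fin n2) (Fin n2) ℝ} {μ1 : Fin n1 → ℝ} (hμ1 : ∀ i, μ1 i * μ1 i = 1)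
    (μ2 : Fin n2 → ℝ) {x : ℝ} (hx : IsUnit (x • (1 : Matrix (Fin n2) (Fin n2) ℝ) - A2).det) :
    (x • 1 - coronaStar A1μ A2 μ1 μ2).det
      = (x • 1 - A2).det ^ n1 *
          ((x * (x - coronal A2 μ2 x)) • (1 : Matrix (Fin n1) (Fin n1) ℝ) - A1μ * A1μ).det := by
  set S := x • (1 : Matrix (Fin n2) (Fin n2) ℝ) - A2
  have hdetK : (S ⊗ₖ (1 : Matrix (Fin n1) (Fin n1) ℝ)).det = S.det ^ n1 := by
    rw [det_kronecker, det_one, one_pow, mul_one, Fintype.card_fin]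
  let _ : Invertible (S ⊗ₖ (1 : Matrix (Fin n1) (Fin n1) ℝ)) :=
    invertibleOfIsUnitDet _ (hdetK ▸ hx.pow n1)
  have hschur : fromRows (0 : Matrix (Fin n1) _ ℝ) (-muBlock μ1 μ2) *
        ⅟(S ⊗ₖ (1 : Matrix (Fin n1) (Fin n1) ℝ)) *
        fromCols (0 : Matrix _ (Fin n1) ℝ) (-(muBlock μ1 μ2)ᵀ)
      = fromBlocks 0 0 0 (coronal A2 μ2 x • (1 : Matrix (Fin n1) (Fin n1) ℝ)) := by
    rw [invOf_eq_nonsing_inv, inv_kronecker, inv_one, fromRows_mul, fromRows_mul_fromCols,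
      coronal, ← muBlock_mul_kronecker_one_mul_transpose hμ1]
    simp [S]
  rw [smul_one_sub_coronaStar, det_fromBlocks₂₂, hschur, hdetK, sub_eq_add_neg,
    fromBlocks_neg, fromBlocks_add]
  simp only [neg_zero, add_zero, ← sub_eq_add_neg, ← sub_smul, det_fromBlocks_smul_one,
    neg_mul_neg]

theorem corona_adjacency_net_regular_general (n1 n2 : ℕ) (k : ℝ)
    (A1 : Matrix (Fin n1) (Fin n1) ℝ)
    (μ1 : Fin n1 → ℝ) (hμ1 : ∀ i, μ1 i = 1 ∨ μ1 i = -1)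
    (A2 : Matrix (Fin n2) (Fin n2) ℝ)
    (μ2 : Fin n2 → ℝ) (hμ2 : ∀ i, μ2 i = 1 ∨ μ2 i = -1)
    (hreg : A2 *ᵥ μ2 = k • μ2)
    (x : ℝ) (hx : IsUnit (x • (1 : Matrix (Fin n2) (Fin n2) ℝ) - A2).det) :
    (x - k) ^ n1 *
        (x • 1 -
          coronaStar (Matrix.diagonal μ1 * A1.map abs * Matrix.diagonal μ1) A2 μ1 μ2).det
      = (x • (1 : Matrix (Fin n2) (Fin n2) ℝ) - A2).det ^ n1 *
        ((x ^ 3 - k * x ^ 2 - (n2 : ℝ) * x) • (1 : Matrix (Fin n1) (Fin n1) ℝ)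
          - (x - k) • (Matrix.diagonal μ1 * A1.map abs * Matrix.diagonal μ1) ^ 2).det := by
  have hcoronal : (x - k) * coronal A2 μ2 x = n2 := by
    rw [sub_mul_coronal_of_mulVec_eq_smul hreg hx,
      dotProduct_self_eq_card fun i => mul_self_eq_one_iff.mpr (hμ2 i), Fintype.card_fin]
  have hcubic : (x - k) * (x * (x - coronal A2 μ2 x)) = x ^ 3 - k * x ^ 2 - n2 * x := by
    linear_combination (-x) * hcoronal
  rw [det_smul_one_sub_coronaStar _ (fun i => mul_self_eq_one_iff.mpr (hμ1 i)) μ2 hx,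
    ← hcubic, ← smul_smul (x - k), sq, ← smul_sub, det_smul, Fintype.card_fin]
  ring

/-- If `A₂·μ₂ = k·μ₂` (as for a `k`-net-regular co-regular signed graph), then
for every real `x` with `x·I − A₂` invertible,
`(x−k)^{n₁}·det(x·I − A(Γ₁⊛Γ₂)) = det(x·I − A₂)^{n₁} · det((x³ − k·x² − n₂·x)·I_{n₁} − (x−k)·A₁μ²)`. -/
theorem corona_adjacency_net_regular (n1 n2 : ℕ) (k : ℝ)
    (A1 : Matrix (Fin n1) (Fin n1) ℝ) (hA1sym : A1.IsSymm) (hA1diag : ∀ i, A1 i i = 0)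
    (hA1ent : ∀ i j, A1 i j = 1 ∨ A1 i j = 0 ∨ A1 i j = -1)
    (μ1 : Fin n1 → ℝ) (hμ1 : ∀ i, μ1 i = 1 ∨ μ1 i = -1)
    (A2 : Matrix (Fin n2) (Fin n2) ℝ) (hA2sym : A2.IsSymm) (hA2diag : ∀ i, A2 i i = 0)
    (hA2ent : ∀ i j, A2 i j = 1 ∨ A2 i j = 0 ∨ A2 i j = -1)
    (μ2 : Fin n2 → ℝ) (hμ2 : ∀ i, μ2 i = 1 ∨ μ2 i = -1)
    (hreg : A2 *ᵥ μ2 = k • μ2)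
    (x : ℝ) (hx : IsUnit (x • (1 : Matrix (Fin n2) (Fin n2) ℝ) - A2).det) :
    (x - k) ^ n1 *
        (x • 1 -
          coronaStar (Matrix.diagonal μ1 * A1.map abs * Matrix.diagonal μ1) A2 μ1 μ2).det
      = (x • (1 : Matrix (Fin n2) (Fin n2) ℝ) - A2).det ^ n1 *
        ((x ^ 3 - k * x ^ 2 - (n2 : ℝ) * x) • (1 : Matrix (Fin n1) (Fin n1) ℝ)
          - (x - k) • (Matrix.diagonal μ1 * A1.map abs * Matrix.diagonal μ1) ^ 2).det :=
  corona_adjacency_net_regular_general n1 n2 k A1 μ1 hμ1 A2 μ2 hμ2 hreg x hx
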